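/- arXiv:1702.06920 — 8 statements merged into one kernel-verified Lean document; each statement's English description precedes it below -/
import Mathlib

section
/- The N-Farey map is injective: if a/b and c/d are reduced fractions with gcd(b,N)=gcd(d,N)=1 and |a|,|b|,|c|,|d| ≤ sqrt((N-1)/2), and a·b⁻¹ ≡ c·d⁻¹ (mod N), then a/b = c/d. -/
/-!
From `a b⁻¹ = c d⁻¹` in `ZMod N` we get `N ∣ ad - cb`. By AM–GM the bounds `2x² ≤ N - 1` give
`2|ad|, 2|cb| ≤ N - 1`, so `|ad - cb| < N`, forcing `ad = cb`.
-/

lemma Int.mul_modEq_mul_of_intCast_mul_inv_eq {N : ℕ} {a b c d : ℤ} (hb : IsCoprime b N)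
    (hd : IsCoprime d N) (h : (a : ZMod N) * (b : ZMod N)⁻¹ = c * (d : ZMod N)⁻¹) :
    a * d ≡ c * b [ZMOD N] := by
  rw [← ZMod.intCast_eq_intCast_iff]
  push_cast
  linear_combination ((b : ZMod N) * d) * h - ((a : ZMod N) * d) * ZMod.coe_int_inv_mul_eq_one hb
    + ((c : ZMod N) * b) * ZMod.coe_int_inv_mul_eq_one hd

section OrderedRing

variable {R : Type*} [CommRing R] [LinearOrder R] [IsStrictOrderedRing R]

lemma two_mul_abs_mul_le_of_two_mul_sq_le {a b M : R} (ha : 2 * a ^ 2 ≤ M)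
    (hb : 2 * b ^ 2 ≤ M) : 2 * |a * b| ≤ M := by
  have h := two_mul_le_add_sq |a| |b|
  rw [sq_abs, sq_abs] at h
  rw [abs_mul]
  linarith

lemma abs_mul_sub_mul_le_of_two_mul_sq_le {a b c d M : R} (ha : 2 * a ^ 2 ≤ M)
    (hb : 2 * b ^ 2 ≤ M) (hc : 2 * c ^ 2 ≤ M) (hd : 2 * d ^ 2 ≤ M) : |a * d - c * b| ≤ M := by
  have had := two_mul_abs_mul_le_of_two_mul_sq_le ha hd
  have hcb := two_mul_abs_mul_le_of_two_mul_sq_le hc hb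
  have := abs_sub (a * d) (c * b)
  linarith

end OrderedRing

lemma div_eq_div_of_mul_eq_mul {K : Type*} [Field K] {a b c d : K} (h : a * d = c * b)
    (hbd : b = 0 ↔ d = 0) : a / b = c / d := by
  by_cases hb : b = 0
  · simp [hb, hbd.mp hb]
  · exact (div_eq_div_iff hb (mt hbd.mpr hb)).mpr h

lemma Int.eq_zero_iff_of_gcd_eq_one {N : ℕ} {b : ℤ} (hbN : Int.gcd b N = 1)
    (hb : 2 * b ^ 2 ≤ (N : ℤ) - 1) : b = 0 ↔ N = 1 := by
  constructor
  · rintro rfl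
    simpa using hbN
  · rintro rfl
    exact pow_eq_zero_iff two_ne_zero |>.mp (by push_cast at hb; nlinarith [sq_nonneg b])

theorem farey_injective_general (N : ℕ) (a b c d : ℤ)
    (hbN : Int.gcd b N = 1) (hdN : Int.gcd d N = 1)
    (ha : 2 * a ^ 2 ≤ (N : ℤ) - 1) (hb : 2 * b ^ 2 ≤ (N : ℤ) - 1)
    (hc : 2 * c ^ 2 ≤ (N : ℤ) - 1) (hd : 2 * d ^ 2 ≤ (N : ℤ) - 1)
    (hcong : (a : ZMod N) * (b : ZMod N)⁻¹ = (c : ZMod N) * (d : ZMod N)⁻¹) :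
    (a : ℚ) / (b : ℚ) = (c : ℚ) / (d : ℚ) := by
  have hmod : a * d ≡ c * b [ZMOD N] := Int.mul_modEq_mul_of_intCast_mul_inv_eq
    (Int.isCoprime_iff_gcd_eq_one.mpr hbN) (Int.isCoprime_iff_gcd_eq_one.mpr hdN) hcong
  have hlt : |c * b - a * d| < N := by
    have := abs_mul_sub_mul_le_of_two_mul_sq_le ha hb hc hd
    rw [abs_sub_comm]
    linarith
  have hcross : a * d = c * b := (sub_eq_zero.mp (Int.eq_zero_of_abs_lt_dvd hmod.dvd hlt)).symm
  refine div_eq_div_of_mul_eq_mul (by exact_mod_cast hcross) ?_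
  rw [Int.cast_eq_zero, Int.cast_eq_zero, Int.eq_zero_iff_of_gcd_eq_one hbN hb,
    Int.eq_zero_iff_of_gcd_eq_one hdN hd]

/-- The `N`-Farey map is injective: if `a/b` and `c/d` are reduced fractions with
denominators coprime to `N`, all of absolute value at most `√((N-1)/2)`
(equivalently `2a² ≤ N-1` etc.), and `a·b⁻¹ ≡ c·d⁻¹ (mod N)`, then `a/b = c/d`. -/
theorem farey_injective (N : ℕ) (hN : 0 < N) (a b c d : ℤ)
    (hab : Int.gcd a b = 1) (hcd : Int.gcd c d = 1)
    (hbN : Int.gcd b N = 1) (hdN : Int.gcd d N = 1)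
    (ha : 2 * a ^ 2 ≤ (N : ℤ) - 1) (hb : 2 * b ^ 2 ≤ (N : ℤ) - 1)
    (hc : 2 * c ^ 2 ≤ (N : ℤ) - 1) (hd : 2 * d ^ 2 ≤ (N : ℤ) - 1)
    (hcong : (a : ZMod N) * (b : ZMod N)⁻¹ = (c : ZMod N) * (d : ZMod N)⁻¹) :
    (a : ℚ) / (b : ℚ) = (c : ℚ) / (d : ℚ) :=
  farey_injective_general N a b c d hbN hdN ha hb hc hd hcong
end

section
/- Any two vectors (x₁,y₁) and (x₂,y₂) in the lattice Λ = ⟨(N,0),(r,1)⟩ ⊂ Z² satisfying x₁²+y₁² < N and x₂²+y₂² < N are collinear, i.e., x₁y₂ - x₂y₁ = 0. -/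
/-!
The cross product of two vectors of `Λ = ⟨(N,0),(r,1)⟩` is `N` times the cross product of their
coordinate vectors, hence a multiple of `N`. By the Lagrange identity its square is at most the
product of the squared lengths, which is `< N²` for short vectors. The only multiple of `N` of
absolute value `< N` is `0`.
-/

section CrossProduct

variable {R : Type*}

theorem sq_mul_sub_mul_add_sq_mul_add_mul [CommRing R] (x₁ y₁ x₂ y₂ : R) :
    (x₁ * y₂ - x₂ * y₁) ^ 2 + (x₁ * x₂ + y₁ * y₂) ^ 2 = (x₁ ^ 2 + y₁ ^ 2) * (x₂ ^ 2 + y₂ ^ 2) := by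
  ring

theorem sq_mul_sub_mul_le [CommRing R] [LinearOrder R] [IsStrictOrderedRing R]
    (x₁ y₁ x₂ y₂ : R) :
    (x₁ * y₂ - x₂ * y₁) ^ 2 ≤ (x₁ ^ 2 + y₁ ^ 2) * (x₂ ^ 2 + y₂ ^ 2) := by
  rw [← sq_mul_sub_mul_add_sq_mul_add_mul]
  exact le_add_of_nonneg_right (sq_nonneg _)

theorem dvd_mul_sub_mul_of_mem_lattice [CommRing R] {N r x₁ y₁ x₂ y₂ : R}
    (h₁ : ∃ a b : R, x₁ = a * N + b * r ∧ y₁ = b)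
    (h₂ : ∃ a b : R, x₂ = a * N + b * r ∧ y₂ = b) :
    N ∣ x₁ * y₂ - x₂ * y₁ := by
  obtain ⟨a₁, _, rfl, rfl⟩ := h₁
  obtain ⟨a₂, _, rfl, rfl⟩ := h₂
  exact ⟨a₁ * y₂ - a₂ * y₁, by ring⟩

end CrossProduct

theorem short_lattice_vectors_collinear_general (N : ℤ) (r : ℤ)
    (x₁ y₁ x₂ y₂ : ℤ)
    (h₁ : ∃ a b : ℤ, x₁ = a * N + b * r ∧ y₁ = b)
    (h₂ : ∃ a b : ℤ, x₂ = a * N + b * r ∧ y₂ = b)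
    (hn₁ : x₁ ^ 2 + y₁ ^ 2 < N) (hn₂ : x₂ ^ 2 + y₂ ^ 2 < N) :
    x₁ * y₂ - x₂ * y₁ = 0 := by
  have hN : 0 ≤ N := (add_nonneg (sq_nonneg x₁) (sq_nonneg y₁)).trans hn₁.le
  have hsq : (x₁ * y₂ - x₂ * y₁) ^ 2 < N ^ 2 :=
    calc (x₁ * y₂ - x₂ * y₁) ^ 2 ≤ (x₁ ^ 2 + y₁ ^ 2) * (x₂ ^ 2 + y₂ ^ 2) := sq_mul_sub_mul_le ..
      _ < N * N := mul_lt_mul'' hn₁ hn₂ (by positivity) (by positivity)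
      _ = N ^ 2 := (sq N).symm
  exact Int.eq_zero_of_abs_lt_dvd (dvd_mul_sub_mul_of_mem_lattice h₁ h₂) (abs_lt_of_sq_lt_sq hsq hN)

/-- Any two vectors `(x₁,y₁)`, `(x₂,y₂)` in the lattice `Λ = ⟨(N,0),(r,1)⟩ ⊂ ℤ²`
with `x₁²+y₁² < N` and `x₂²+y₂² < N` are collinear: `x₁y₂ - x₂y₁ = 0`. -/
theorem short_lattice_vectors_collinear (N : ℤ) (hN : 0 < N) (r : ℤ)
    (x₁ y₁ x₂ y₂ : ℤ)
    (h₁ : ∃ a b : ℤ, x₁ = a * N + b * r ∧ y₁ = b)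
    (h₂ : ∃ a b : ℤ, x₂ = a * N + b * r ∧ y₂ = b)
    (hn₁ : x₁ ^ 2 + y₁ ^ 2 < N) (hn₂ : x₂ ^ 2 + y₂ ^ 2 < N) :
    x₁ * y₂ - x₂ * y₁ = 0 :=
  short_lattice_vectors_collinear_general N r x₁ y₁ x₂ y₂ h₁ h₂ hn₁ hn₂
end

section
/- Suppose N = N'·M with gcd(N',M)=1, and a,b coprime integers with gcd(b,N')=1, a ≡ b·r (mod N'), and (a²+b²)·M < N'. Then for every vector (x,y) in the lattice Λ = ⟨(N,0),(r,1)⟩ with 0 < x²+y² < N, we have x·b = y·a; in particular if y ≠ 0 then x/y = a/b. -/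
/-!
For `(x, y) ∈ Λ` we have `x ≡ y r` and `a ≡ b r (mod N')`, so the cross product `x b - y a` is
divisible by `N'`. By Lagrange's identity its square is at most
`(x² + y²)(a² + b²) < N (a² + b²) = N' · (a² + b²) M < N'²`, hence it vanishes.
-/

theorem sq_mul_sub_mul_le_sq_add_sq_mul {R : Type*} [CommRing R] [LinearOrder R]
    [IsStrictOrderedRing R] (x y a b : R) :
    (x * b - y * a) ^ 2 ≤ (x ^ 2 + y ^ 2) * (a ^ 2 + b ^ 2) := by
  have lagrange :
      (x ^ 2 + y ^ 2) * (a ^ 2 + b ^ 2) = (x * b - y * a) ^ 2 + (x * a + y * b) ^ 2 := by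
    ring
  rw [lagrange]
  exact le_add_of_nonneg_right (sq_nonneg _)

theorem dvd_mul_sub_mul_of_eq_mul_add_mul {n N r a b u x y : ℤ} (hnN : n ∣ N)
    (hcong : n ∣ a - b * r) (hx : x = u * N + y * r) : n ∣ x * b - y * a := by
  have hxb : x * b - y * a = u * b * N - y * (a - b * r) := by rw [hx]; ring
  rw [hxb]
  exact dvd_sub (dvd_mul_of_dvd_right hnN _) (dvd_mul_of_dvd_right hcong _)

theorem error_tolerant_reconstruction_general (N' M N r a b : ℤ)
    (hN' : 0 < N') (hN : N = N' * M)
    (hb : b ≠ 0)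
    (hcong : N' ∣ a - b * r) (hbound : (a ^ 2 + b ^ 2) * M < N') :
    ∀ x y : ℤ, (∃ u v : ℤ, x = u * N + v * r ∧ y = v) →
      0 < x ^ 2 + y ^ 2 → x ^ 2 + y ^ 2 < N →
      x * b = y * a ∧ (y ≠ 0 → (x : ℚ) / (y : ℚ) = (a : ℚ) / (b : ℚ)) := by
  rintro x y ⟨u, v, hx, rfl⟩ - hlt
  have hdvd : N' ∣ x * b - y * a :=
    dvd_mul_sub_mul_of_eq_mul_add_mul (hN ▸ dvd_mul_right N' M) hcong hx
  have hsmall : (x * b - y * a) ^ 2 < N' ^ 2 :=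
    calc (x * b - y * a) ^ 2 ≤ (x ^ 2 + y ^ 2) * (a ^ 2 + b ^ 2) :=
          sq_mul_sub_mul_le_sq_add_sq_mul x y a b
      _ < N * (a ^ 2 + b ^ 2) := mul_lt_mul_of_pos_right hlt (by positivity)
      _ = N' * ((a ^ 2 + b ^ 2) * M) := by rw [hN]; ring
      _ < N' * N' := mul_lt_mul_of_pos_left hbound hN'
      _ = N' ^ 2 := (sq N').symm
  have hcross : x * b = y * a :=
    sub_eq_zero.mp (Int.eq_zero_of_abs_lt_dvd hdvd (abs_lt_of_sq_lt_sq hsmall hN'.le))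
  refine ⟨hcross, fun hy => ?_⟩
  rw [div_eq_div_iff (Int.cast_ne_zero.mpr hy) (Int.cast_ne_zero.mpr hb)]
  exact_mod_cast hcross.trans (mul_comm y a)

/-- Error-tolerant reconstruction: if `N = N'·M` with `gcd(N',M)=1`,
`gcd(a,b)=1`, `gcd(b,N')=1`, `b ≠ 0`, `a ≡ b·r (mod N')` and `(a²+b²)·M < N'`,
then every vector `(x,y)` of the lattice `Λ = ⟨(N,0),(r,1)⟩` with
`0 < x²+y² < N` satisfies `x·b = y·a`; in particular if `y ≠ 0` then `x/y = a/b`. -/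
theorem error_tolerant_reconstruction (N' M N r a b : ℤ)
    (hN' : 0 < N') (hM : 0 < M) (hcop : Int.gcd N' M = 1) (hN : N = N' * M)
    (hab : Int.gcd a b = 1) (hbN' : Int.gcd b N' = 1) (hb : b ≠ 0)
    (hcong : N' ∣ a - b * r) (hbound : (a ^ 2 + b ^ 2) * M < N') :
    ∀ x y : ℤ, (∃ u v : ℤ, x = u * N + v * r ∧ y = v) →
      0 < x ^ 2 + y ^ 2 → x ^ 2 + y ^ 2 < N →
      x * b = y * a ∧ (y ≠ 0 → (x : ℚ) / (y : ℚ) = (a : ℚ) / (b : ℚ)) :=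
  error_tolerant_reconstruction_general N' M N r a b hN' hN hb hcong hbound
end

section
/- Under the assumptions that N = N'·M with gcd(N',M)=1, gcd(a,b)=1, gcd(b,N')=1, a ≡ b·r (mod N'), and (a²+b²)M < N', there exists a nonzero vector (x,y) ∈ Λ = ⟨(N,0),(r,1)⟩ with x²+y² < N (namely (aM,bM)). -/
lemma exists_lattice_coords_of_dvd_sub {N' M r a b : ℤ} (h : N' ∣ a - b * r) :
    ∃ u v : ℤ, a * M = u * (N' * M) + v * r ∧ b * M = v := by
  obtain ⟨k, hk⟩ := h
  exact ⟨k, b * M, by linear_combination M * hk, rfl⟩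

lemma not_mul_right_eq_zero_and {a b M : ℤ} (hab : ¬(a = 0 ∧ b = 0)) (hM : M ≠ 0) :
    ¬(a * M = 0 ∧ b * M = 0) := by
  simpa [hM] using hab

lemma sq_add_sq_mul_lt {N' M a b : ℤ} (hM : 0 < M) (hbound : (a ^ 2 + b ^ 2) * M < N') :
    (a * M) ^ 2 + (b * M) ^ 2 < N' * M :=
  calc (a * M) ^ 2 + (b * M) ^ 2 = (a ^ 2 + b ^ 2) * M * M := by ring
    _ < N' * M := mul_lt_mul_of_pos_right hbound hM

theorem short_vector_exists_general (N' M N r a b : ℤ)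
    (hM : 0 < M) (hN : N = N' * M)
    (hab0 : ¬(a = 0 ∧ b = 0))
    (hcong : N' ∣ a - b * r) (hbound : (a ^ 2 + b ^ 2) * M < N') :
    ∃ x y : ℤ, (∃ u v : ℤ, x = u * N + v * r ∧ y = v) ∧
      ¬(x = 0 ∧ y = 0) ∧ x ^ 2 + y ^ 2 < N := by
  subst hN
  exact ⟨a * M, b * M, exists_lattice_coords_of_dvd_sub hcong,
    not_mul_right_eq_zero_and hab0 hM.ne', sq_add_sq_mul_lt hM hbound⟩

/-- Under the hypotheses of error-tolerant reconstruction, there exists a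
nonzero vector `(x,y)` in the lattice `Λ = ⟨(N,0),(r,1)⟩` with `x²+y² < N`
(namely `(aM, bM)`). -/
theorem short_vector_exists (N' M N r a b : ℤ)
    (hN' : 0 < N') (hM : 0 < M) (hcop : Int.gcd N' M = 1) (hN : N = N' * M)
    (hab : Int.gcd a b = 1) (hbN' : Int.gcd b N' = 1) (hab0 : ¬(a = 0 ∧ b = 0))
    (hcong : N' ∣ a - b * r) (hbound : (a ^ 2 + b ^ 2) * M < N') :
    ∃ x y : ℤ, (∃ u v : ℤ, x = u * N + v * r ∧ y = v) ∧
      ¬(x = 0 ∧ y = 0) ∧ x ^ 2 + y ^ 2 < N :=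
  short_vector_exists_general N' M N r a b hM hN hab0 hcong hbound
end

section
/- If (x,y) is a shortest nonzero vector of the lattice Λ = ⟨(N,0),(r,1)⟩, and the hypotheses N = N'M, gcd(N',M)=1, gcd(a,b)=1, gcd(b,N')=1, a ≡ br (mod N'), (a²+b²)M < N' hold, then gcd(x,y) divides M. -/
/-!
The vector `M • (a, b)` lies in `Λ`, so the shortest vector `(x, y)` has squared norm at most
`(a² + b²) M²`. The cross product `b x - a y` is divisible by `N'`, while by the Lagrange identity its
square is at most `(a² + b²)² M² < N'²`; hence it vanishes and `(x, y) = k • (a, b)`. As both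
`k • (a, b)` and `M • (a, b)` lie in `Λ`, so does `gcd(k, M) • (a, b)`, and minimality forces
`|k| = gcd(k, M)`, a divisor of `M`.
-/

def sqNorm (p : ℤ × ℤ) : ℤ := p.1 ^ 2 + p.2 ^ 2

theorem sqNorm_smul (k : ℤ) (p : ℤ × ℤ) : sqNorm (k • p) = k ^ 2 * sqNorm p := by
  simp only [sqNorm, Prod.smul_fst, Prod.smul_snd, smul_eq_mul]
  ring

theorem sqNorm_nonneg (p : ℤ × ℤ) : 0 ≤ sqNorm p := by
  unfold sqNorm
  positivity

theorem sqNorm_pos {p : ℤ × ℤ} (hp : p ≠ 0) : 0 < sqNorm p := by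
  obtain ⟨x, y⟩ := p
  have hxy : x ≠ 0 ∨ y ≠ 0 := by
    rw [Ne, Prod.ext_iff, not_and_or] at hp
    exact hp
  unfold sqNorm
  rcases hxy with h | h <;> positivity

theorem sq_mul_sub_mul_le_s6 (a b x y : ℤ) :
    (b * x - a * y) ^ 2 ≤ sqNorm (a, b) * sqNorm (x, y) := by
  have lagrange : sqNorm (a, b) * sqNorm (x, y) = (b * x - a * y) ^ 2 + (a * x + b * y) ^ 2 := by
    simp only [sqNorm]
    ring
  rw [lagrange]
  exact le_add_of_nonneg_right (sq_nonneg _)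

theorem eq_zero_of_dvd_of_sq_lt {n z : ℤ} (hn : n ∣ z) (h : z ^ 2 < n ^ 2) : z = 0 :=
  Int.eq_zero_of_abs_lt_dvd ((abs_dvd n z).2 hn) (sq_lt_sq.1 h)

theorem exists_eq_mul_of_mul_eq_mul {a b x y : ℤ} (hab : IsCoprime a b) (hb : b ≠ 0)
    (h : b * x = a * y) : ∃ k, x = k * a ∧ y = k * b := by
  obtain ⟨k, rfl⟩ : b ∣ y := hab.symm.dvd_of_dvd_mul_left ⟨x, h.symm⟩
  refine ⟨k, mul_left_cancel₀ hb ?_, mul_comm _ _⟩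
  linear_combination h

theorem dvd_of_smul_mem_of_sqNorm_le {Λ : AddSubgroup (ℤ × ℤ)} {k M : ℤ} {w : ℤ × ℤ}
    (hshort : ∀ q ∈ Λ, q ≠ 0 → sqNorm (k • w) ≤ sqNorm q)
    (hkw : k • w ∈ Λ) (hMw : M • w ∈ Λ) (hk : k ≠ 0) (hM : M ≠ 0) (hw : w ≠ 0) : k ∣ M := by
  set g : ℤ := (Int.gcd k M : ℤ) with hg
  have hgw : g • w ∈ Λ := by
    rw [hg, Int.gcd_eq_gcd_ab, add_smul, mul_comm k, mul_comm M, mul_smul, mul_smul]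
    exact add_mem (zsmul_mem hkw _) (zsmul_mem hMw _)
  have hg0 : g ≠ 0 := Int.ofNat_ne_zero.2 (Int.gcd_ne_zero_right hM)
  have hsq : k ^ 2 ≤ g ^ 2 := by
    have hle := hshort _ hgw (smul_ne_zero hg0 hw)
    rw [sqNorm_smul, sqNorm_smul] at hle
    exact le_of_mul_le_mul_right hle (sqNorm_pos hw)
  have hgk : g ≤ |k| := Int.le_of_dvd (abs_pos.2 hk) ((dvd_abs _ _).2 (Int.gcd_dvd_left k M))
  have hkg : |k| = g := le_antisymm ((sq_le_sq.1 hsq).trans_eq (abs_of_nonneg (by positivity))) hgk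
  rw [← abs_dvd, hkg]
  exact Int.gcd_dvd_right k M

def congruenceLattice (N r : ℤ) : AddSubgroup (ℤ × ℤ) where
  carrier := {p | N ∣ p.1 - p.2 * r}
  add_mem' {p q} hp hq := by
    simpa only [Set.mem_ofPred_eq, Prod.fst_add, Prod.snd_add, add_mul, add_sub_add_comm]
      using dvd_add hp hq
  zero_mem' := by simp
  neg_mem' {p} hp := by
    simpa only [Set.mem_ofPred_eq, Prod.fst_neg, Prod.snd_neg, neg_mul, neg_sub_neg, dvd_sub_comm]
      using hp

theorem mem_congruenceLattice_iff_exists {N r : ℤ} {p : ℤ × ℤ} :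
    p ∈ congruenceLattice N r ↔ ∃ u v : ℤ, p.1 = u * N + v * r ∧ p.2 = v := by
  constructor
  · rintro ⟨u, hu⟩
    exact ⟨u, p.2, by linear_combination hu, rfl⟩
  · rintro ⟨u, v, h1, h2⟩
    exact ⟨u, by rw [h1, h2]; ring⟩

theorem shortest_vector_gcd_dvd_general (N' M N r a b x y : ℤ)
    (hM : 0 < M) (hN : N = N' * M)
    (hab : Int.gcd a b = 1) (hb : b ≠ 0)
    (hcong : N' ∣ a - b * r) (hbound : (a ^ 2 + b ^ 2) * M < N')
    (hmem : ∃ u v : ℤ, x = u * N + v * r ∧ y = v)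
    (hne : ¬(x = 0 ∧ y = 0))
    (hshort : ∀ x' y' : ℤ, (∃ u v : ℤ, x' = u * N + v * r ∧ y' = v) →
      ¬(x' = 0 ∧ y' = 0) → x ^ 2 + y ^ 2 ≤ x' ^ 2 + y' ^ 2) :
    (Int.gcd x y : ℤ) ∣ M := by
  set Λ := congruenceLattice N r
  have hmin : ∀ q ∈ Λ, q ≠ 0 → sqNorm (x, y) ≤ sqNorm q := fun q hq hq0 =>
    hshort q.1 q.2 (mem_congruenceLattice_iff_exists.1 hq) (by simpa [Prod.ext_iff] using hq0)
  have hw : ((a, b) : ℤ × ℤ) ≠ 0 := by simp [Prod.ext_iff, hb]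
  have hMw : M • (a, b) ∈ Λ := by
    show N ∣ M * a - M * b * r
    rw [hN, show M * a - M * b * r = (a - b * r) * M by ring]
    exact mul_dvd_mul_right hcong M
  have hxy : (x, y) ∈ Λ := mem_congruenceLattice_iff_exists.2 hmem
  have hcross : b * x - a * y = 0 := by
    refine eq_zero_of_dvd_of_sq_lt (n := N') ?_ ?_
    · rw [show b * x - a * y = b * (x - y * r) - y * (a - b * r) by ring]
      exact ((dvd_trans ⟨M, hN⟩ hxy).mul_left b).sub (hcong.mul_left y)
    calc (b * x - a * y) ^ 2 ≤ sqNorm (a, b) * sqNorm (x, y) := sq_mul_sub_mul_le_s6 a b x y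
      _ ≤ sqNorm (a, b) * sqNorm (M • (a, b)) :=
          mul_le_mul_of_nonneg_left (hmin _ hMw (smul_ne_zero hM.ne' hw)) (sqNorm_nonneg _)
      _ = ((a ^ 2 + b ^ 2) * M) ^ 2 := by rw [sqNorm_smul]; simp only [sqNorm]; ring
      _ < N' ^ 2 := pow_lt_pow_left₀ hbound (by positivity) two_ne_zero
  obtain ⟨k, rfl, rfl⟩ :=
    exists_eq_mul_of_mul_eq_mul (Int.isCoprime_iff_gcd_eq_one.2 hab) hb (sub_eq_zero.1 hcross)
  have hkw : ((k * a, k * b) : ℤ × ℤ) = k • (a, b) := rfl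
  have hk : k ≠ 0 := by rintro rfl; simp at hne
  rw [hkw] at hmin
  have hkM : k ∣ M := dvd_of_smul_mem_of_sqNorm_le hmin (hkw ▸ hxy) hMw hk hM.ne' hw
  rw [Int.gcd_mul_left, hab, mul_one]
  exact Int.natAbs_dvd.2 hkM

/-- If `(x,y)` is a shortest nonzero vector of the lattice `Λ = ⟨(N,0),(r,1)⟩`,
and `N = N'·M`, `gcd(N',M)=1`, `gcd(a,b)=1`, `gcd(b,N')=1`, `b ≠ 0`,
`a ≡ b·r (mod N')`, `(a²+b²)·M < N'`, then `gcd(x,y)` divides `M`. -/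
theorem shortest_vector_gcd_dvd (N' M N r a b x y : ℤ)
    (hN' : 0 < N') (hM : 0 < M) (hcop : Int.gcd N' M = 1) (hN : N = N' * M)
    (hab : Int.gcd a b = 1) (hbN' : Int.gcd b N' = 1) (hb : b ≠ 0)
    (hcong : N' ∣ a - b * r) (hbound : (a ^ 2 + b ^ 2) * M < N')
    (hmem : ∃ u v : ℤ, x = u * N + v * r ∧ y = v)
    (hne : ¬(x = 0 ∧ y = 0))
    (hshort : ∀ x' y' : ℤ, (∃ u v : ℤ, x' = u * N + v * r ∧ y' = v) →
      ¬(x' = 0 ∧ y' = 0) → x ^ 2 + y ^ 2 ≤ x' ^ 2 + y' ^ 2) :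
    (Int.gcd x y : ℤ) ∣ M :=
  shortest_vector_gcd_dvd_general N' M N r a b x y hM hN hab hb hcong hbound hmem hne hshort
end

section
/- Suppose the set of bad primes is finite. Then the modular reconstruction loop terminates: there exists a finite set P of good primes whose product N' exceeds (a²+b²)·M for any fixed target a/b and any product M of bad primes occurring, so that error-tolerant rational reconstruction returns a/b. -/
theorem Set.Finite.exists_prime_gt_notMem {S : Set ℕ} (hS : S.Finite) (n : ℕ) :
    ∃ p, p.Prime ∧ p ∉ S ∧ n < p := by
  obtain ⟨p, ⟨hp, hpS⟩, hnp⟩ := (Nat.infinite_setOfPred_prime.sdiff hS).exists_gt n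
  exact ⟨p, hp, hpS, hnp⟩

theorem modular_reconstruction_terminates_general (a b : ℤ)
    (Bad : Set ℕ) (hBadFin : Bad.Finite) :
    ∀ Q : Finset ℕ, (∀ p ∈ Q, p ∈ Bad) →
      ∃ P : Finset ℕ, (∀ p ∈ P, Nat.Prime p ∧ p ∉ Bad) ∧
        (a ^ 2 + b ^ 2) * (∏ p ∈ Q, (p : ℤ)) < ∏ p ∈ P, (p : ℤ) := by
  intro Q _
  set C : ℤ := (a ^ 2 + b ^ 2) * ∏ p ∈ Q, (p : ℤ)
  -- A single good prime larger than `C` already suffices.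
  obtain ⟨p, hp, hpBad, hCp⟩ := hBadFin.exists_prime_gt_notMem C.toNat
  refine ⟨{p}, by simpa using ⟨hp, hpBad⟩, ?_⟩
  rw [Finset.prod_singleton]
  exact (Int.self_le_toNat C).trans_lt (by exact_mod_cast hCp)

/-- If the set of bad primes is finite, the modular reconstruction loop
terminates: for any fixed reduced fraction `a/b` and any product `M` of bad
primes occurring, there is a finite set `P` of good primes whose product `N'`
satisfies `(a²+b²)·M < N'`, so that error-tolerant rational reconstruction
returns `a/b`. -/
theorem modular_reconstruction_terminates (a b : ℤ) (hab : Int.gcd a b = 1)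
    (Bad : Set ℕ) (hBadPrime : ∀ p ∈ Bad, Nat.Prime p) (hBadFin : Bad.Finite) :
    ∀ Q : Finset ℕ, (∀ p ∈ Q, p ∈ Bad) →
      ∃ P : Finset ℕ, (∀ p ∈ P, Nat.Prime p ∧ p ∉ Bad) ∧
        (a ^ 2 + b ^ 2) * (∏ p ∈ Q, (p : ℤ)) < ∏ p ∈ P, (p : ℤ) :=
  modular_reconstruction_terminates_general a b Bad hBadFin
end

section
/- If a prime p does not divide any lead coefficient of a minimal strong Gröbner basis G_Z of the ideal ⟨F⟩ ⊂ Z[X] generated by primitive homogeneous polynomials F, then the reduction of G_Z modulo p is a Gröbner basis of ⟨F_p⟩ ⊂ (Z/p)[X] with the same lead monomials. -/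
/-! Every nonzero `f ∈ ⟨F_p⟩` lifts to some `h ∈ ⟨F⟩`; take one of least lead monomial.
If `p` divided the lead coefficient of `h`, pick `g ∈ G_Z` whose lead term divides that of
`h`: the quotient of the lead coefficients is divisible by `p`, because `p ∤ lc g`, so
subtracting the corresponding multiple of `g` from `h` gives a lift of smaller lead monomial.
Hence `p ∤ lc h`, reduction mod `p` keeps the lead monomials of `h` and `g`, and
`lm g ∣ lm h = lm f`. -/

/-- The lead exponent (lead monomial) of a multivariate polynomial with respect
to a monomial order: the maximum of its support. (Junk value `0` for `f = 0`.) -/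
noncomputable def leadExp {σ : Type*} (m : MonomialOrder σ) {R : Type*} [CommSemiring R]
    (f : MvPolynomial σ R) : σ →₀ ℕ :=
  m.toSyn.symm (f.support.sup fun d => m.toSyn d)

/-- The lead coefficient of a multivariate polynomial with respect to a monomial order. -/
noncomputable def leadCoeff {σ : Type*} (m : MonomialOrder σ) {R : Type*} [CommSemiring R]
    (f : MvPolynomial σ R) : R :=
  f.coeff (leadExp m f)

/-- A polynomial over `ℤ` is primitive if its coefficients have no common
non-unit divisor. -/
def IsPrimitivePoly {σ : Type*} (f : MvPolynomial σ ℤ) : Prop :=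
  ∀ d : ℤ, (∀ u : σ →₀ ℕ, d ∣ f.coeff u) → IsUnit d

/-- `G` is a strong Gröbner basis of `I ⊆ ℤ[X]`: `G ⊆ I` and for every nonzero
`f ∈ I` the lead term of some element of `G` divides the lead term of `f`. -/
def IsStrongGB {σ : Type*} (m : MonomialOrder σ) (G : Finset (MvPolynomial σ ℤ))
    (I : Ideal (MvPolynomial σ ℤ)) : Prop :=
  (∀ g ∈ G, g ∈ I) ∧ ∀ f ∈ I, f ≠ 0 → ∃ g ∈ G, g ≠ 0 ∧
    leadCoeff m g ∣ leadCoeff m f ∧ ∀ i, leadExp m g i ≤ leadExp m f i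

/-- A strong Gröbner basis is minimal if no lead term of one of its elements
divides the lead term of another. -/
def IsMinimalStrongGB {σ : Type*} (m : MonomialOrder σ) (G : Finset (MvPolynomial σ ℤ))
    (I : Ideal (MvPolynomial σ ℤ)) : Prop :=
  IsStrongGB m G I ∧ ∀ g ∈ G, ∀ g' ∈ G, g ≠ g' →
    ¬(leadCoeff m g ∣ leadCoeff m g' ∧ ∀ i, leadExp m g i ≤ leadExp m g' i)

/-- `G` is a Gröbner basis of an ideal `I` over a field: `G ⊆ I` and for every
nonzero `f ∈ I` the lead monomial of some element of `G` divides that of `f`. -/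
def IsGB {σ : Type*} (m : MonomialOrder σ) {K : Type*} [Field K]
    (G : Finset (MvPolynomial σ K)) (I : Ideal (MvPolynomial σ K)) : Prop :=
  (∀ g ∈ G, g ∈ I) ∧ ∀ f ∈ I, f ≠ 0 → ∃ g ∈ G, g ≠ 0 ∧
    ∀ i, leadExp m g i ≤ leadExp m f i

lemma leadExp_eq_degree {σ R : Type*} [CommSemiring R] (m : MonomialOrder σ)
    (f : MvPolynomial σ R) :
    leadExp m f = m.degree f :=
  rfl

namespace MonomialOrder

open MvPolynomial

variable {σ : Type*} {m : MonomialOrder σ} {R S : Type*} [CommRing R] [CommRing S]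

lemma degree_sub_lt_of_leadingTerm_eq {f g : MvPolynomial σ R}
    (hfg : m.leadingTerm f = m.leadingTerm g) (hne : f - g ≠ 0) :
    m.degree (f - g) ≺[m] m.degree f := by
  obtain ⟨hc, hd⟩ := m.leadingTerm_eq_leadingTerm_iff.mp hfg
  refine lt_of_le_of_ne (by simpa [hd] using m.degree_sub_le (f := f) (g := g)) fun h ↦ ?_
  apply m.leadingCoeff_ne_zero_iff.mpr hne
  rw [leadingCoeff, m.toSyn.injective h, coeff_sub, ← leadingCoeff, hd, ← leadingCoeff, hc,
    sub_self]

lemma leadingTerm_mul_monomial_eq {f g : MvPolynomial σ R} {c : R}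
    (hf : f ≠ 0) (hc : m.leadingCoeff f = m.leadingCoeff g * c)
    (hle : m.degree g ≤ m.degree f) :
    m.leadingTerm (g * monomial (m.degree f - m.degree g) c) = m.leadingTerm f := by
  classical
  have hne : m.leadingCoeff g * m.leadingCoeff (monomial (m.degree f - m.degree g) c) ≠ 0 := by
    rw [leadingCoeff_monomial, ← hc]
    exact m.leadingCoeff_ne_zero_iff.mpr hf
  rw [leadingTerm_eq_leadingTerm_iff, leadingCoeff_mul_of_mul_leadingCoeff_ne_zero hne,
    degree_mul_of_mul_leadingCoeff_ne_zero hne, leadingCoeff_monomial, ← hc, degree_monomial,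
    if_neg (right_ne_zero_of_mul (hc ▸ m.leadingCoeff_ne_zero_iff.mpr hf)),
    add_tsub_cancel_of_le hle]
  exact ⟨rfl, rfl⟩

section Map

variable (φ : R →+* S) {f : MvPolynomial σ R}

lemma degree_map_of_map_leadingCoeff_ne_zero (hf : φ (m.leadingCoeff f) ≠ 0) :
    m.degree (map φ f) = m.degree f := by
  refine m.toSyn.injective (le_antisymm (m.degree_le_iff.mpr fun d hd ↦
    m.le_degree (support_map_subset φ f hd)) (m.le_degree ?_))
  rwa [mem_support_iff, coeff_map]

lemma leadingCoeff_map_of_map_leadingCoeff_ne_zero (hf : φ (m.leadingCoeff f) ≠ 0) :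
    m.leadingCoeff (map φ f) = φ (m.leadingCoeff f) := by
  rw [leadingCoeff, degree_map_of_map_leadingCoeff_ne_zero φ hf, coeff_map, leadingCoeff]

lemma map_ne_zero_of_map_leadingCoeff_ne_zero (hf : φ (m.leadingCoeff f) ≠ 0) :
    map φ f ≠ 0 :=
  m.leadingCoeff_ne_zero_iff.mp (leadingCoeff_map_of_map_leadingCoeff_ne_zero φ hf ▸ hf)

end Map

theorem exists_mem_map_eq_and_map_leadingCoeff_ne_zero [NoZeroDivisors S] (φ : R →+* S)
    {I : Ideal (MvPolynomial σ R)} {G : Set (MvPolynomial σ R)} (hGI : ∀ g ∈ G, g ∈ I)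
    (hG : ∀ h ∈ I, h ≠ 0 →
      ∃ g ∈ G, m.leadingCoeff g ∣ m.leadingCoeff h ∧ m.degree g ≤ m.degree h)
    (hφG : ∀ g ∈ G, φ (m.leadingCoeff g) ≠ 0) {h : MvPolynomial σ R} (hI : h ∈ I)
    (hh : map φ h ≠ 0) :
    ∃ h' ∈ I, map φ h' = map φ h ∧ φ (m.leadingCoeff h') ≠ 0 := by
  induction hd : m.toSyn (m.degree h) using WellFoundedLT.induction generalizing h with
  | _ d ih =>
  by_cases hlc : φ (m.leadingCoeff h) ≠ 0
  · exact ⟨h, hI, rfl, hlc⟩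
  have h0 : h ≠ 0 := by rintro rfl; exact hh (map_zero _)
  obtain ⟨g, hgG, ⟨c, hc⟩, hle⟩ := hG h hI h0
  have hφc : φ c = 0 := by
    rw [not_not, hc, map_mul] at hlc
    exact (mul_eq_zero.mp hlc).resolve_left (hφG g hgG)
  set q := g * monomial (m.degree h - m.degree g) c
  have hφq : map φ q = 0 := by simp [q, hφc]
  have hφhq : map φ (h - q) = map φ h := by rw [map_sub, hφq, sub_zero]
  have hlt : m.toSyn (m.degree (h - q)) < d := hd ▸ degree_sub_lt_of_leadingTerm_eq
    (leadingTerm_mul_monomial_eq h0 hc hle).symm fun h0 ↦ hh (by rw [← hφhq, h0, map_zero])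
  obtain ⟨h', hh'I, hh'h, hh'⟩ := ih _ hlt (I.sub_mem hI (I.mul_mem_right _ (hGI g hgG)))
    (hφhq ▸ hh) rfl
  exact ⟨h', hh'I, hh'h.trans hφhq, hh'⟩

end MonomialOrder

theorem groebner_reduction_mod_good_prime_general (n : ℕ) (m : MonomialOrder (Fin n))
    (F : Finset (MvPolynomial (Fin n) ℤ))
    (G : Finset (MvPolynomial (Fin n) ℤ))
    (hG : IsMinimalStrongGB m G (Ideal.span (F : Set (MvPolynomial (Fin n) ℤ))))
    (p : ℕ) (hp : Fact p.Prime)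
    (hlc : ∀ g ∈ G, ¬ ((p : ℤ) ∣ leadCoeff m g)) :
    IsGB m (G.image (MvPolynomial.map (Int.castRingHom (ZMod p))))
      (Ideal.span ((F.image (MvPolynomial.map (Int.castRingHom (ZMod p)))) :
        Set (MvPolynomial (Fin n) (ZMod p)))) ∧
    ∀ g ∈ G, leadExp m (MvPolynomial.map (Int.castRingHom (ZMod p)) g) = leadExp m g := by
  open MonomialOrder in
  obtain ⟨⟨hGI, hGB⟩, -⟩ := hG
  set φ := Int.castRingHom (ZMod p)
  have hφG : ∀ g ∈ G, φ (m.leadingCoeff g) ≠ 0 := fun g hg h ↦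
    hlc g hg ((ZMod.intCast_zmod_eq_zero_iff_dvd _ p).mp h)
  have hspan : Ideal.span (F.image (MvPolynomial.map φ) : Set (MvPolynomial (Fin n) (ZMod p))) =
      (Ideal.span (F : Set (MvPolynomial (Fin n) ℤ))).map (MvPolynomial.map φ) := by
    rw [Ideal.map_span, Finset.coe_image]
  refine ⟨⟨?_, ?_⟩, fun g hg ↦ degree_map_of_map_leadingCoeff_ne_zero φ (hφG g hg)⟩
  · simp only [Finset.mem_image, forall_exists_index, and_imp, forall_apply_eq_imp_iff₂]
    exact fun g hg ↦ hspan ▸ Ideal.mem_map_of_mem _ (hGI g hg)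
  intro f hf hf0
  obtain ⟨h₀, hh₀, rfl⟩ := (Ideal.mem_map_iff_of_surjective _
    (MvPolynomial.map_surjective φ (ZMod.ringHom_surjective φ))).mp (hspan ▸ hf)
  obtain ⟨h, hI, hφh, hh⟩ := exists_mem_map_eq_and_map_leadingCoeff_ne_zero φ (G := G) hGI
    (fun h hI h0 ↦ (hGB h hI h0).imp fun g ⟨hg, _, hdvd, hle⟩ ↦ ⟨hg, hdvd, hle⟩)
    hφG hh₀ hf0
  obtain ⟨g, hg, -, -, hle⟩ := hGB h hI fun h0 ↦ hh (by simp [h0])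
  refine ⟨MvPolynomial.map φ g, Finset.mem_image_of_mem _ hg,
    map_ne_zero_of_map_leadingCoeff_ne_zero φ (hφG g hg), ?_⟩
  rw [← hφh, leadExp_eq_degree, leadExp_eq_degree,
    degree_map_of_map_leadingCoeff_ne_zero φ (hφG g hg),
    degree_map_of_map_leadingCoeff_ne_zero φ hh]
  exact hle

/-- If a prime `p` divides no lead coefficient of a minimal strong Gröbner basis
`G` of the ideal `⟨F⟩ ⊂ ℤ[X]` generated by primitive homogeneous polynomials,
then the reduction of `G` modulo `p` is a Gröbner basis of `⟨F_p⟩ ⊂ (ℤ/p)[X]`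
with the same lead monomials. -/
theorem groebner_reduction_mod_good_prime (n : ℕ) (m : MonomialOrder (Fin n))
    (F : Finset (MvPolynomial (Fin n) ℤ))
    (hprim : ∀ f ∈ F, IsPrimitivePoly f)
    (hhom : ∀ f ∈ F, ∃ d, f.IsHomogeneous d)
    (G : Finset (MvPolynomial (Fin n) ℤ))
    (hG : IsMinimalStrongGB m G (Ideal.span (F : Set (MvPolynomial (Fin n) ℤ))))
    (p : ℕ) (hp : Fact p.Prime)
    (hlc : ∀ g ∈ G, ¬ ((p : ℤ) ∣ leadCoeff m g)) :
    IsGB m (G.image (MvPolynomial.map (Int.castRingHom (ZMod p))))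
      (Ideal.span ((F.image (MvPolynomial.map (Int.castRingHom (ZMod p)))) :
        Set (MvPolynomial (Fin n) (ZMod p)))) ∧
    ∀ g ∈ G, leadExp m (MvPolynomial.map (Int.castRingHom (ZMod p)) g) = leadExp m g :=
  groebner_reduction_mod_good_prime_general n m F G hG p hp hlc
end

section
/- Let Λ ⊆ Z² be a lattice of index N and v a shortest nonzero vector of Λ with ‖v‖² < N. Then every w ∈ Λ with ‖w‖² < N is an integer multiple of v. -/
/-!
If `w ∈ Λ` is not parallel to `v`, then `v` and `w` span a sublattice of `Λ` whose index is the
absolute value `|det(v, w)|` of their determinant; it is a nonzero multiple of `N`, whereas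
`det(v, w)² ≤ ‖v‖²‖w‖² < N²`. If `w` is parallel to `v`, write `⟪v, w⟫ = k‖v‖² + r` with
`0 ≤ r < ‖v‖²`: then `‖v‖² (w - k v) = r v`, so `w - k v ∈ Λ` is strictly shorter than `v`, hence
zero.
-/

open Module

theorem Module.Basis.linearIndependent_of_det_ne_zero {R M ι : Type*} [CommRing R] [IsDomain R]
    [AddCommGroup M] [Module R M] [Fintype ι] [DecidableEq ι] (e : Basis ι R M) {v : ι → M}
    (h : e.det v ≠ 0) : LinearIndependent R v := by
  rw [e.det_apply] at h
  exact LinearIndependent.of_comp e.equivFun.toLinearMap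
    (Matrix.linearIndependent_cols_of_det_ne_zero h)

theorem Module.Basis.finTwoProd_det {R : Type*} [CommRing R] (v w : R × R) :
    (Basis.finTwoProd R).det ![v, w] = v.1 * w.2 - v.2 * w.1 := by
  simp only [Basis.det_apply, Matrix.det_fin_two, Basis.toMatrix_apply, Matrix.cons_val_zero,
    Matrix.cons_val_one, Basis.coe_finTwoProd_repr]
  ring

theorem Module.Basis.index_span_eq_natAbs_det {E ι : Type*} [AddCommGroup E] [Fintype ι]
    [DecidableEq ι] (e : Basis ι ℤ E) {v : ι → E} (hv : LinearIndependent ℤ v) :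
    (Submodule.span ℤ (Set.range v)).toAddSubgroup.index = (e.det v).natAbs := by
  rw [AddSubgroup.index_eq_natAbs_det e _ (Basis.span hv)]
  congr 2
  ext i
  exact congrArg Subtype.val (Basis.span_apply hv i)

theorem index_dvd_natAbs_det_of_mem {Λ : AddSubgroup (ℤ × ℤ)} {v w : ℤ × ℤ} (hv : v ∈ Λ)
    (hw : w ∈ Λ) (hd : v.1 * w.2 - v.2 * w.1 ≠ 0) :
    Λ.index ∣ (v.1 * w.2 - v.2 * w.1).natAbs := by
  rw [← Basis.finTwoProd_det] at hd ⊢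
  rw [← (Basis.finTwoProd ℤ).index_span_eq_natAbs_det
    ((Basis.finTwoProd ℤ).linearIndependent_of_det_ne_zero hd)]
  refine AddSubgroup.index_dvd_of_le ?_
  rw [Submodule.span_int_eq_addSubgroupClosure, AddSubgroup.closure_le]
  exact Set.range_subset_iff.2 (Fin.forall_fin_two.2 ⟨hv, hw⟩)

theorem sq_det_le_sumSq_mul_sumSq {R : Type*} [CommRing R] [LinearOrder R]
    [IsStrictOrderedRing R] (v w : R × R) :
    (v.1 * w.2 - v.2 * w.1) ^ 2 ≤ (v.1 ^ 2 + v.2 ^ 2) * (w.1 ^ 2 + w.2 ^ 2) := by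
  nlinarith [sq_nonneg (v.1 * w.1 + v.2 * w.2)]

theorem sumSq_smul_eq_dot_smul_of_det_eq_zero {R : Type*} [CommRing R] {v w : R × R}
    (hd : v.1 * w.2 - v.2 * w.1 = 0) :
    (v.1 ^ 2 + v.2 ^ 2) • w = (v.1 * w.1 + v.2 * w.2) • v := by
  ext <;> simp only [Prod.smul_fst, Prod.smul_snd, smul_eq_mul]
  · linear_combination -v.2 * hd
  · linear_combination v.1 * hd

theorem exists_eq_zsmul_of_det_eq_zero {Λ : AddSubgroup (ℤ × ℤ)} {v w : ℤ × ℤ} (hv : v ∈ Λ)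
    (hv0 : v ≠ 0) (hshort : ∀ u ∈ Λ, u ≠ 0 → v.1 ^ 2 + v.2 ^ 2 ≤ u.1 ^ 2 + u.2 ^ 2)
    (hw : w ∈ Λ) (hd : v.1 * w.2 - v.2 * w.1 = 0) : ∃ k : ℤ, w = k • v := by
  set n := v.1 ^ 2 + v.2 ^ 2
  set r := (v.1 * w.1 + v.2 * w.2) % n
  have hn : 0 < n := by
    obtain h | h : v.1 ≠ 0 ∨ v.2 ≠ 0 := by
      contrapose! hv0
      exact Prod.ext hv0.1 hv0.2
    all_goals positivity
  refine ⟨(v.1 * w.1 + v.2 * w.2) / n, ?_⟩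
  set u := w - ((v.1 * w.1 + v.2 * w.2) / n) • v
  have hnu : n • u = r • v := by
    rw [smul_sub, sumSq_smul_eq_dot_smul_of_det_eq_zero hd, smul_smul, ← sub_smul,
      ← Int.emod_def]
  have hu : u.1 ^ 2 + u.2 ^ 2 < n := by
    have h1 : n * u.1 = r * v.1 := congrArg Prod.fst hnu
    have h2 : n * u.2 = r * v.2 := congrArg Prod.snd hnu
    have hnorm : n * (u.1 ^ 2 + u.2 ^ 2) = r ^ 2 := by
      refine mul_left_cancel₀ hn.ne' ?_
      linear_combination (n * u.1 + r * v.1) * h1 + (n * u.2 + r * v.2) * h2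
    have hr : 0 ≤ r ∧ r < n := ⟨Int.emod_nonneg _ hn.ne', Int.emod_lt_of_pos _ hn⟩
    nlinarith
  have hu0 : u = 0 := by
    by_contra hu0
    exact hu.not_ge (hshort u (sub_mem hw (AddSubgroup.zsmul_mem _ hv _)) hu0)
  exact sub_eq_zero.1 hu0

theorem short_vectors_multiple_of_shortest_general (Λ : AddSubgroup (ℤ × ℤ)) (N : ℕ)
    (hidx : Λ.index = N) (v : ℤ × ℤ) (hv : v ∈ Λ) (hv0 : v ≠ 0)
    (hshort : ∀ u ∈ Λ, u ≠ 0 → v.1 ^ 2 + v.2 ^ 2 ≤ u.1 ^ 2 + u.2 ^ 2)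
    (hvn : v.1 ^ 2 + v.2 ^ 2 < (N : ℤ)) :
    ∀ w ∈ Λ, w.1 ^ 2 + w.2 ^ 2 < (N : ℤ) → ∃ k : ℤ, w = k • v := by
  intro w hw hwn
  by_cases hd : v.1 * w.2 - v.2 * w.1 = 0
  · exact exists_eq_zsmul_of_det_eq_zero hv hv0 hshort hw hd
  have hdvd : N ∣ (v.1 * w.2 - v.2 * w.1).natAbs :=
    hidx ▸ index_dvd_natAbs_det_of_mem hv hw hd
  have hN_le : (N : ℤ) ≤ |v.1 * w.2 - v.2 * w.1| := by
    rw [Int.abs_eq_natAbs]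
    exact_mod_cast Nat.le_of_dvd (Int.natAbs_pos.2 hd) hdvd
  have key : (N : ℤ) * N < N * N :=
    calc (N : ℤ) * N ≤ |v.1 * w.2 - v.2 * w.1| * |v.1 * w.2 - v.2 * w.1| :=
          mul_self_le_mul_self (Int.natCast_nonneg N) hN_le
      _ = (v.1 * w.2 - v.2 * w.1) ^ 2 := by rw [abs_mul_abs_self, sq]
      _ ≤ (v.1 ^ 2 + v.2 ^ 2) * (w.1 ^ 2 + w.2 ^ 2) := sq_det_le_sumSq_mul_sumSq v w
      _ < N * N := mul_lt_mul'' hvn hwn (by positivity) (by positivity)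
  exact absurd key (lt_irrefl _)

/-- If `Λ ⊆ ℤ²` is a lattice of index `N` and `v` is a shortest nonzero vector
of `Λ` with `‖v‖² < N`, then every `w ∈ Λ` with `‖w‖² < N` is an integer
multiple of `v`. -/
theorem short_vectors_multiple_of_shortest (Λ : AddSubgroup (ℤ × ℤ)) (N : ℕ)
    (hidx : Λ.index = N) (hN : 0 < N) (v : ℤ × ℤ) (hv : v ∈ Λ) (hv0 : v ≠ 0)
    (hshort : ∀ u ∈ Λ, u ≠ 0 → v.1 ^ 2 + v.2 ^ 2 ≤ u.1 ^ 2 + u.2 ^ 2)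
    (hvn : v.1 ^ 2 + v.2 ^ 2 < (N : ℤ)) :
    ∀ w ∈ Λ, w.1 ^ 2 + w.2 ^ 2 < (N : ℤ) → ∃ k : ℤ, w = k • v :=
  short_vectors_multiple_of_shortest_general Λ N hidx v hv hv0 hshort hvn
end
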